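/- arXiv:2304.03202 — 5 statements merged into one kernel-verified Lean document; each statement's English description precedes it below -/
import Mathlib

section
/- Let v ∈ R^d (d ≥ 1) with sorted entries v_(1) ≥ v_(2) ≥ ... ≥ v_(d), and let 1 ≤ F < d. Suppose v_(F) > v_(F+1) (so the scalar below is well-defined and positive). If m = (Σ_{i=1}^{F+1} v_(i) − (F+1)·v_(F+1))^{-1}, then for the scaled vector m·v, the condition 1 + k·(m·v_(k)) > Σ_{i≤k} m·v_(i) holds for k = F but fails for k = F+1. -/
open Finset

/-!
Write `E k = ∑_{i ≤ k} v_i − k v_k`. The support condition for `m • v` at `k` reads `m E k < 1`,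
and `E (F+1) = E F + F (v_F − v_{F+1})`. Sortedness gives `E F ≥ 0`, the gap gives
`E F < E (F+1)`, so with `m = (E (F+1))⁻¹` the condition holds at `F` and is an equality at `F+1`.
-/

noncomputable def headExcess (v : ℕ → ℝ) (k : ℕ) : ℝ :=
  ∑ i ∈ Icc 1 k, v i - k * v k

theorem headExcess_succ (v : ℕ → ℝ) (k : ℕ) :
    headExcess v (k + 1) = headExcess v k + k * (v k - v (k + 1)) := by
  rw [headExcess, headExcess, sum_Icc_succ_top (by omega)]
  push_cast
  ring

theorem headExcess_nonneg {v : ℕ → ℝ} {k : ℕ} (h : ∀ i ∈ Icc 1 k, v k ≤ v i) :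
    0 ≤ headExcess v k := by
  have := card_nsmul_le_sum (Icc 1 k) v (v k) h
  rw [Nat.card_Icc, nsmul_eq_mul] at this
  rw [headExcess]
  push_cast at this
  linarith

theorem headExcess_lt_succ {v : ℕ → ℝ} {k : ℕ} (hk : 1 ≤ k) (hgap : v (k + 1) < v k) :
    headExcess v k < headExcess v (k + 1) := by
  rw [headExcess_succ]
  have : (0 : ℝ) < k := by exact_mod_cast hk
  nlinarith

theorem sum_lt_one_add_mul_iff (v : ℕ → ℝ) (k : ℕ) (m : ℝ) :
    ∑ i ∈ Icc 1 k, m * v i < 1 + (k : ℝ) * (m * v k) ↔ m * headExcess v k < 1 := by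
  rw [← mul_sum, headExcess]
  constructor <;> intro h <;> linarith

/-- Lemma 3.2 (increase-sparsity case): for a vector with entries `v 1 ≥ ... ≥ v d`
(1-based, sorted descending) and `1 ≤ F < d` with `v F > v (F+1)`, scaling by
`m = (∑_{i=1}^{F+1} v i − (F+1) v (F+1))⁻¹` makes the sparsemax support condition
`1 + k (m v_k) > ∑_{i ≤ k} m v_i` hold at `k = F` but fail at `k = F + 1`. -/
theorem stmt1 (d F : ℕ) (v : ℕ → ℝ)
    (hF : 1 ≤ F) (hFd : F + 1 ≤ d)
    (hsorted : ∀ i j, 1 ≤ i → i ≤ j → j ≤ d → v j ≤ v i)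
    (hgap : v (F + 1) < v F)
    (m : ℝ)
    (hm : m = ((∑ i ∈ Finset.Icc 1 (F + 1), v i) - (F + 1 : ℝ) * v (F + 1))⁻¹) :
    (1 + (F : ℝ) * (m * v F) > ∑ i ∈ Finset.Icc 1 F, m * v i) ∧
      ¬(1 + ((F : ℝ) + 1) * (m * v (F + 1)) > ∑ i ∈ Finset.Icc 1 (F + 1), m * v i) := by
  have hm : m = (headExcess v (F + 1))⁻¹ := by rw [hm, headExcess]; push_cast; rfl
  have hE : 0 ≤ headExcess v F :=
    headExcess_nonneg fun i hi => hsorted i F (mem_Icc.1 hi).1 (mem_Icc.1 hi).2 (by omega)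
  have hlt := headExcess_lt_succ hF hgap
  have hpos : 0 < headExcess v (F + 1) := hE.trans_lt hlt
  refine ⟨(sum_lt_one_add_mul_iff v F m).2 ?_, ?_⟩
  · rwa [hm, inv_mul_lt_one₀ hpos]
  · have := sum_lt_one_add_mul_iff v (F + 1) m
    push_cast at this
    rw [gt_iff_lt, this, hm, inv_mul_cancel₀ hpos.ne']
    exact lt_irrefl 1
end

section
/- Let v ∈ R^d with sorted entries v_(1) ≥ ... ≥ v_(d), F ≥ 1, and suppose v_(F) > v_(F+1) and m > 0 satisfies m > 1/(Σ_{i=1}^{F+1} v_(i) − (F+1)·v_(F+1)). Then the index k(m·v) := max{k : 1 + k·m·v_(k) > Σ_{i≤k} m·v_(i)} satisfies k(m·v) ≤ F. -/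
/-!
With `topExcess v k = ∑_{i ≤ k} (v_i - v_k)`, the support condition for `m • v` at `k` reads
`m · topExcess v k < 1`. For sorted `v`, `topExcess v k` is nondecreasing in `k`, and the gap
`v_F > v_{F+1}` makes `topExcess v (F + 1)` positive, so the bound on `m` says exactly that
`m · topExcess v (F + 1) > 1`; hence no `k ≥ F + 1` satisfies the condition.
-/

open Finset

noncomputable def topExcess (v : ℕ → ℝ) (k : ℕ) : ℝ :=
  ∑ i ∈ Icc 1 k, (v i - v k)

lemma topExcess_eq (v : ℕ → ℝ) (k : ℕ) :
    topExcess v k = ∑ i ∈ Icc 1 k, v i - k * v k := by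
  simp [topExcess, sum_sub_distrib]

lemma lt_sum_Icc_mul_iff (v : ℕ → ℝ) (m : ℝ) (k : ℕ) :
    ∑ i ∈ Icc 1 k, m * v i < 1 + k * (m * v k) ↔ m * topExcess v k < 1 := by
  rw [← mul_sum, topExcess_eq]
  constructor <;> intro h <;> linarith

section Antitone

variable {v : ℕ → ℝ}

lemma topExcess_mono {j k : ℕ} (hv : AntitoneOn v (Set.Icc 1 k)) (hjk : j ≤ k) :
    topExcess v j ≤ topExcess v k := by
  have hle : ∀ i ∈ Icc 1 k, v k ≤ v i := fun i hi ↦ by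
    rw [mem_Icc] at hi
    exact hv hi ⟨hi.1.trans hi.2, le_rfl⟩ hi.2
  calc topExcess v j
      ≤ ∑ i ∈ Icc 1 j, (v i - v k) := by
        refine sum_le_sum fun i hi ↦ ?_
        rw [mem_Icc] at hi
        have hj : 1 ≤ j := hi.1.trans hi.2
        have := hv ⟨hj, hjk⟩ ⟨hj.trans hjk, le_rfl⟩ hjk
        linarith
    _ ≤ topExcess v k :=
        sum_le_sum_of_subset_of_nonneg (Icc_subset_Icc_right hjk)
          fun i hi _ ↦ sub_nonneg.2 (hle i hi)

lemma topExcess_succ_pos {k : ℕ} (hv : AntitoneOn v (Set.Icc 1 (k + 1))) (hk : 1 ≤ k)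
    (hgap : v (k + 1) < v k) : 0 < topExcess v (k + 1) := by
  refine sum_pos' (fun i hi ↦ ?_) ⟨k, mem_Icc.2 ⟨hk, k.le_succ⟩, sub_pos.2 hgap⟩
  rw [mem_Icc] at hi
  exact sub_nonneg.2 (hv hi ⟨hk.trans k.le_succ, le_rfl⟩ hi.2)

end Antitone

theorem stmt2_general (d F : ℕ) (v : ℕ → ℝ)
    (hF : 1 ≤ F) (hFd : F + 1 ≤ d)
    (hsorted : ∀ i j, 1 ≤ i → i ≤ j → j ≤ d → v j ≤ v i)
    (hgap : v (F + 1) < v F)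
    (m : ℝ)
    (hm : m > 1 / ((∑ i ∈ Finset.Icc 1 (F + 1), v i) - (F + 1 : ℝ) * v (F + 1))) :
    sSup {k : ℕ | 1 ≤ k ∧ k ≤ d ∧
        1 + (k : ℝ) * (m * v k) > ∑ i ∈ Finset.Icc 1 k, m * v i} ≤ F := by
  have hv : AntitoneOn v (Set.Icc 1 d) := fun i hi j hj hij ↦ hsorted i j hi.1 hij hj.2
  have hpos := topExcess_succ_pos (hv.mono (Set.Icc_subset_Icc_right hFd)) hF hgap
  have hmE : 1 < m * topExcess v (F + 1) := by
    rw [topExcess_eq, Nat.cast_succ] at hpos ⊢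
    rwa [gt_iff_lt, div_lt_iff₀ hpos] at hm
  refine csSup_le' fun k ⟨_, hkd, hk⟩ ↦ not_lt.1 fun hFk ↦ ?_
  rw [gt_iff_lt, lt_sum_Icc_mul_iff] at hk
  have hm0 : 0 < m := (pos_iff_pos_of_mul_pos (one_pos.trans hmE)).2 hpos
  have := mul_le_mul_of_nonneg_left (topExcess_mono (hv.mono (Set.Icc_subset_Icc_right hkd)) hFk) hm0.le
  linarith

/-- If `v 1 ≥ ... ≥ v d` (1-based, sorted descending), `1 ≤ F`, `v F > v (F+1)` and
`m > 1 / (∑_{i=1}^{F+1} v i − (F+1) v (F+1))`, then the sparsemax support size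
`k(m·v) = max {k ∈ [1,d] : 1 + k (m v_k) > ∑_{i ≤ k} m v_i}` is at most `F`. -/
theorem stmt2 (d F : ℕ) (v : ℕ → ℝ)
    (hF : 1 ≤ F) (hFd : F + 1 ≤ d)
    (hsorted : ∀ i j, 1 ≤ i → i ≤ j → j ≤ d → v j ≤ v i)
    (hgap : v (F + 1) < v F)
    (m : ℝ) (hm0 : m > 0)
    (hm : m > 1 / ((∑ i ∈ Finset.Icc 1 (F + 1), v i) - (F + 1 : ℝ) * v (F + 1))) :
    sSup {k : ℕ | 1 ≤ k ∧ k ≤ d ∧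
        1 + (k : ℝ) * (m * v k) > ∑ i ∈ Finset.Icc 1 k, m * v i} ≤ F :=
  stmt2_general d F v hF hFd hsorted hgap m hm
end

section
/- The condition set in the sparsemax threshold is downward-closed: if 1 + k·v_(k) > Σ_{i≤k} v_(i) holds for some k, then 1 + j·v_(j) > Σ_{i≤j} v_(i) holds for all 1 ≤ j ≤ k, where v_(i) are the entries of v sorted in descending order. -/
/-!
The sparsemax condition at `k` says that the slack `S k = 1 + k·v_k - ∑_{i ≤ k} v_i` is positive.
Passing from `k` to `k + 1` adds `v_{k+1}` to the sum and changes `k·v_k` to `(k+1)·v_{k+1}`,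
so `S (k + 1) - S k = k·(v_{k+1} - v_k) ≤ 0` for sorted entries: `S` is antitone, and positivity
of `S k` propagates down to every `j ≤ k`.
-/

open Finset

noncomputable def sparsemaxSlack (v : ℕ → ℝ) (k : ℕ) : ℝ :=
  1 + k * v k - ∑ i ∈ Icc 1 k, v i

lemma sparsemaxSlack_succ (v : ℕ → ℝ) (k : ℕ) :
    sparsemaxSlack v (k + 1) = sparsemaxSlack v k + k * (v (k + 1) - v k) := by
  simp only [sparsemaxSlack, sum_Icc_succ_top (Nat.le_add_left 1 k)]
  push_cast
  ring

lemma sparsemaxSlack_succ_le {v : ℕ → ℝ} {k : ℕ} (h : v (k + 1) ≤ v k) :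
    sparsemaxSlack v (k + 1) ≤ sparsemaxSlack v k := by
  rw [sparsemaxSlack_succ]
  exact add_le_of_nonpos_right (mul_nonpos_of_nonneg_of_nonpos k.cast_nonneg (sub_nonpos.mpr h))

lemma antitoneOn_sparsemaxSlack {v : ℕ → ℝ} {s : Set ℕ} (hs : s.OrdConnected)
    (hv : AntitoneOn v s) : AntitoneOn (sparsemaxSlack v) s :=
  antitoneOn_of_add_one_le hs fun k _ hk hk1 ↦
    sparsemaxSlack_succ_le (hv hk hk1 (Nat.le_succ k))

/-- Downward closedness of the sparsemax condition set: for sorted entries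
`v 1 ≥ ... ≥ v d` (1-based), if `1 + k · v k > ∑_{i ≤ k} v i` holds for some `k ≤ d`,
then `1 + j · v j > ∑_{i ≤ j} v i` holds for all `1 ≤ j ≤ k`. -/
theorem stmt4 (d : ℕ) (v : ℕ → ℝ)
    (hsorted : ∀ i j, 1 ≤ i → i ≤ j → j ≤ d → v j ≤ v i) :
    ∀ k j, 1 ≤ j → j ≤ k → k ≤ d →
      (1 + (k : ℝ) * v k > ∑ i ∈ Finset.Icc 1 k, v i) →
        1 + (j : ℝ) * v j > ∑ i ∈ Finset.Icc 1 j, v i := by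
  intro k j hj hjk hkd hk
  have hv : AntitoneOn v (Set.Icc 1 d) := fun a ha b hb hab ↦ hsorted a b ha.1 hab hb.2
  have hslack : sparsemaxSlack v k ≤ sparsemaxSlack v j :=
    antitoneOn_sparsemaxSlack Set.ordConnected_Icc hv ⟨hj, hjk.trans hkd⟩
      ⟨hj.trans hjk, hkd⟩ hjk
  have hk_pos : 0 < sparsemaxSlack v k := by unfold sparsemaxSlack; linarith
  have hj_pos : 0 < sparsemaxSlack v j := hk_pos.trans_le hslack
  unfold sparsemaxSlack at hj_pos
  linarith
end

section
/- For v ∈ R^d, let k = k(v) := max{j : 1 + j·v_(j) > Σ_{i≤j} v_(i)} and τ(v) := (Σ_{i≤k} v_(i) − 1)/k. Then the vector p with p_i = max(v_i − τ(v), 0) lies in the probability simplex, i.e., p_i ≥ 0 for all i and Σ_i p_i = 1. -/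
open Finset

/-!
Since `v` is sorted, the defining condition of `k` makes `τ` a separating threshold:
`v i > τ` for `i ≤ k` (from the condition at `k`, using `k τ = ∑_{i ≤ k} v i - 1`) and
`v i ≤ τ` for `k < i ≤ d` (from the failure of the condition at `k + 1`). Hence `p` is
`v - τ` on the first `k` entries and `0` afterwards, and its sum is `∑_{i ≤ k} v i - k τ = 1`.
-/

lemma sum_Icc_max_sub_eq_of_threshold {v : ℕ → ℝ} {k d : ℕ} {τ : ℝ} (hkd : k ≤ d)
    (hhead : ∀ i ∈ Icc 1 k, τ ≤ v i) (htail : ∀ i ∈ Ioc k d, v i ≤ τ) :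
    ∑ i ∈ Icc 1 d, max (v i - τ) 0 = ∑ i ∈ Icc 1 k, v i - k * τ := by
  have hhead' : ∑ i ∈ Icc 1 k, max (v i - τ) 0 = ∑ i ∈ Icc 1 k, (v i - τ) :=
    sum_congr rfl fun i hi => max_eq_left (sub_nonneg.mpr (hhead i hi))
  have htail' : ∑ i ∈ Ioc k d, max (v i - τ) 0 = 0 :=
    sum_eq_zero fun i hi => max_eq_right (sub_nonpos.mpr (htail i hi))
  have hsplit : ∑ i ∈ Icc 1 d, max (v i - τ) 0
      = ∑ i ∈ Icc 1 k, max (v i - τ) 0 + ∑ i ∈ Ioc k d, max (v i - τ) 0 := by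
    have hIcc (n : ℕ) : Icc 1 n = Ioc 0 n := Icc_add_one_left_eq_Ioc 0 n
    rw [hIcc, hIcc]
    exact (sum_Ioc_consecutive _ (Nat.zero_le k) hkd).symm
  rw [hsplit, hhead', htail', add_zero, sum_sub_distrib, sum_const, Nat.card_Icc,
    Nat.add_sub_cancel, nsmul_eq_mul]

lemma sum_Icc_max_sub_eq_of_sorted {v : ℕ → ℝ} {k d : ℕ} {τ : ℝ}
    (hsorted : ∀ i j, 1 ≤ i → i ≤ j → j ≤ d → v j ≤ v i) (hkd : k ≤ d)
    (hτ_le : τ ≤ v k) (hle_τ : k + 1 ≤ d → v (k + 1) ≤ τ) :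
    ∑ i ∈ Icc 1 d, max (v i - τ) 0 = ∑ i ∈ Icc 1 k, v i - k * τ := by
  refine sum_Icc_max_sub_eq_of_threshold hkd (fun i hi => ?_) (fun i hi => ?_)
  · obtain ⟨h1i, hik⟩ := mem_Icc.mp hi
    exact hτ_le.trans (hsorted i k h1i hik hkd)
  · obtain ⟨hki, hid⟩ := mem_Ioc.mp hi
    exact (hsorted (k + 1) i (by omega) hki hid).trans (hle_τ (by omega))

/-- For sorted entries `v 1 ≥ ... ≥ v d` (1-based), with
`k = max {j ∈ [1,d] : 1 + j · v j > ∑_{i ≤ j} v i}` and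
`τ = (∑_{i ≤ k} v i − 1) / k`, the vector `p i = max (v i − τ) 0` lies in the
probability simplex: all entries nonnegative and they sum to 1. -/
theorem stmt5 (d : ℕ) (hd : 1 ≤ d) (v : ℕ → ℝ)
    (hsorted : ∀ i j, 1 ≤ i → i ≤ j → j ≤ d → v j ≤ v i)
    (k : ℕ)
    (hk : k = sSup {j : ℕ | 1 ≤ j ∧ j ≤ d ∧
        1 + (j : ℝ) * v j > ∑ i ∈ Finset.Icc 1 j, v i})
    (τ : ℝ) (hτ : τ = ((∑ i ∈ Finset.Icc 1 k, v i) - 1) / k)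
    (p : ℕ → ℝ) (hp : ∀ i, p i = max (v i - τ) 0) :
    (∀ i ∈ Finset.Icc 1 d, 0 ≤ p i) ∧ ∑ i ∈ Finset.Icc 1 d, p i = 1 := by
  set S := {j : ℕ | 1 ≤ j ∧ j ≤ d ∧ 1 + (j : ℝ) * v j > ∑ i ∈ Icc 1 j, v i}
  have hbdd : BddAbove S := ⟨d, fun j hj => hj.2.1⟩
  obtain ⟨hk1, hkd, hkgt⟩ : k ∈ S := hk ▸ Nat.sSup_mem ⟨1, le_rfl, hd, by simp⟩ hbdd
  have hkpos : (0 : ℝ) < k := by exact_mod_cast hk1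
  have hτ_lt : τ < v k := by
    rw [hτ, div_lt_iff₀ hkpos]
    linarith
  have hle_τ : k + 1 ≤ d → v (k + 1) ≤ τ := by
    intro hk1d
    have hnot : k + 1 ∉ S := notMem_of_csSup_lt (by omega) hbdd
    simp only [S, Set.mem_ofPred_eq, not_and, not_lt] at hnot
    have hfail := hnot (by omega) hk1d
    rw [sum_Icc_succ_top (by omega)] at hfail
    push_cast at hfail
    rw [hτ, le_div_iff₀ hkpos]
    linarith
  refine ⟨fun i _ => hp i ▸ le_max_right _ _, ?_⟩
  rw [sum_congr rfl fun i _ => hp i, sum_Icc_max_sub_eq_of_sorted hsorted hkd hτ_lt.le hle_τ, hτ]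
  field_simp
  ring
end

section
/- With notation as in the previous statement, the minimum value satisfies min_R E(R) = 1 − Σ_{x∈𝒳, y∈𝒴} P_{X,Y}(x,y)²/P_X(x). Equivalently, defining the quadratic mutual information I_q(X,Y) := Σ_{x,y} P_{X,Y}(x,y)²/P_X(x) − Σ_y P_Y(y)², one has min_R E(R) = 1 − Σ_y P_Y(y)² − I_q(X,Y). -/
/-!
For each `x`, the inner sum is the sum of `‖R(x,·) − e_y‖²` weighted by `P(x,y)`; completing the square shows it
equals `P_X(x) − ∑_y P(x,y)²/P_X(x) + P_X(x)·‖R(x,·) − P(·|x)‖²`. Hence the minimum is attained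
exactly at the conditional distribution `R(x,y) = P(x,y)/P_X(x)`.
-/

open Finset

section QuadraticLoss

variable {Y K : Type*} [Fintype Y] [DecidableEq Y]

/-- `(1 - r y) ^ 2 + ∑ y' ≠ y, r y' ^ 2` is the squared distance from `r` to the indicator of `y`. -/
def quadraticLoss [CommRing K] (p r : Y → K) : K :=
  ∑ y, p y * ((1 - r y) ^ 2 + ∑ y' ∈ univ.erase y, r y' ^ 2)

theorem quadraticLoss_eq [CommRing K] (p r : Y → K) :
    quadraticLoss p r = ∑ y, p y - 2 * ∑ y, p y * r y + (∑ y, p y) * ∑ y, r y ^ 2 := by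
  have hrow (y : Y) : p y * ((1 - r y) ^ 2 + ∑ y' ∈ univ.erase y, r y' ^ 2)
      = p y - 2 * (p y * r y) + p y * ∑ y', r y' ^ 2 := by
    rw [sum_erase_eq_sub (mem_univ y)]
    ring
  simp only [quadraticLoss, hrow, sum_add_distrib, sum_sub_distrib, ← mul_sum, ← sum_mul]

theorem quadraticLoss_eq_add_sum_sq [Field K] (p r : Y → K) (hp : ∑ y, p y ≠ 0) :
    quadraticLoss p r = ∑ y, p y - ∑ y, p y ^ 2 / ∑ y', p y'
      + (∑ y', p y') * ∑ y, (r y - p y / ∑ y', p y') ^ 2 := by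
  set S := ∑ y, p y
  have hsq (y : Y) : S * (r y - p y / S) ^ 2 = S * r y ^ 2 - 2 * (p y * r y) + p y ^ 2 / S := by
    field_simp
    ring
  rw [quadraticLoss_eq, mul_sum univ (fun y => (r y - p y / S) ^ 2), sum_congr rfl fun y _ => hsq y,
    sum_add_distrib, sum_sub_distrib, ← mul_sum, ← mul_sum, ← sum_div]
  ring

theorem quadraticLoss_div_sum [Field K] (p : Y → K) (hp : ∑ y, p y ≠ 0) :
    quadraticLoss p (fun y => p y / ∑ y', p y') = ∑ y, p y - ∑ y, p y ^ 2 / ∑ y', p y' := by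
  simp [quadraticLoss_eq_add_sum_sq p _ hp]

theorem sub_sum_sq_div_le_quadraticLoss [Field K] [LinearOrder K] [IsStrictOrderedRing K]
    (p r : Y → K) (hp : 0 < ∑ y, p y) :
    ∑ y, p y - ∑ y, p y ^ 2 / ∑ y', p y' ≤ quadraticLoss p r := by
  rw [quadraticLoss_eq_add_sum_sq p r hp.ne']
  exact le_add_of_nonneg_right (mul_nonneg hp.le (sum_nonneg fun y _ => sq_nonneg _))

end QuadraticLoss

theorem stmt10_general {X Y : Type*} [Fintype X] [Fintype Y] [DecidableEq Y]
    (P : X → Y → ℝ)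
    (hP1 : ∑ x, ∑ y, P x y = 1)
    (hPX : ∀ x, 0 < ∑ y, P x y) :
    IsLeast
      {e : ℝ | ∃ R : X → Y → ℝ, (∀ x, ∑ y, R x y = 1) ∧
        e = ∑ x, ∑ y, P x y * ((1 - R x y) ^ 2 +
          ∑ y' ∈ Finset.univ.erase y, (R x y') ^ 2)}
      (1 - ∑ x, ∑ y, (P x y) ^ 2 / (∑ y', P x y')) ∧
    1 - ∑ x, ∑ y, (P x y) ^ 2 / (∑ y', P x y') =
      1 - ∑ y, (∑ x, P x y) ^ 2 -
        ((∑ x, ∑ y, (P x y) ^ 2 / (∑ y', P x y')) - ∑ y, (∑ x, P x y) ^ 2) := by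
  have hmin : 1 - ∑ x, ∑ y, P x y ^ 2 / ∑ y', P x y'
      = ∑ x, (∑ y, P x y - ∑ y, P x y ^ 2 / ∑ y', P x y') := by
    rw [sum_sub_distrib, hP1]
  refine ⟨⟨⟨fun x y => P x y / ∑ y', P x y', fun x => ?_, ?_⟩, ?_⟩, by ring⟩
  · rw [← sum_div, div_self (hPX x).ne']
  · exact hmin.trans (sum_congr rfl fun x _ => (quadraticLoss_div_sum (P x) (hPX x).ne').symm)
  · rintro e ⟨R, -, rfl⟩
    exact hmin.trans_le (sum_le_sum fun x _ => sub_sum_sq_div_le_quadraticLoss (P x) (R x) (hPX x))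

/-- The minimum of `E(R)` over `R` with `∑_y R x y = 1` for each `x` equals
`1 − ∑_{x,y} P(x,y)²/P_X(x)`, equivalently `1 − ∑_y P_Y(y)² − I_q(X,Y)` where
`I_q(X,Y) = ∑_{x,y} P(x,y)²/P_X(x) − ∑_y P_Y(y)²`. -/
theorem stmt10 {X Y : Type*} [Fintype X] [Fintype Y] [DecidableEq Y]
    (P : X → Y → ℝ) (hP0 : ∀ x y, 0 ≤ P x y)
    (hP1 : ∑ x, ∑ y, P x y = 1)
    (hPX : ∀ x, 0 < ∑ y, P x y) :
    IsLeast
      {e : ℝ | ∃ R : X → Y → ℝ, (∀ x, ∑ y, R x y = 1) ∧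
        e = ∑ x, ∑ y, P x y * ((1 - R x y) ^ 2 +
          ∑ y' ∈ Finset.univ.erase y, (R x y') ^ 2)}
      (1 - ∑ x, ∑ y, (P x y) ^ 2 / (∑ y', P x y')) ∧
    1 - ∑ x, ∑ y, (P x y) ^ 2 / (∑ y', P x y') =
      1 - ∑ y, (∑ x, P x y) ^ 2 -
        ((∑ x, ∑ y, (P x y) ^ 2 / (∑ y', P x y')) - ∑ y, (∑ x, P x y) ^ 2) :=
  stmt10_general P hP1 hPX
end
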